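/- For every integer j ≥ 2, ĝ_{j+2}(0) = ((j+1)/(2π(j−1)))·(j·ĝ_j(0) − (2j−1)/ω_j), where ĝ_j denotes the even real-analytic extension to (−π,π) of θ ↦ g_j(−cos θ); in particular ĝ_j(0) = lim_{t→−1⁺} g_j(t). -/

import Mathlib

open Real Set Filter Topology

noncomputable def sphereVol (m : ℕ) : ℝ := 2 * π ^ ((m : ℝ) / 2) / Real.Gamma ((m : ℝ) / 2)

/-- The Berg functions `g_j`, defined recursively. -/
noncomputable def berg : ℕ → ℝ → ℝ
  | 0 => fun _ => 0
  | 1 => fun _ => 0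
  | 2 => fun t => (1 / (2 * π)) * (π - Real.arccos t) * Real.sqrt (1 - t ^ 2) - t / (4 * π)
  | 3 => fun t => (1 / (2 * π)) * (1 + t * Real.log (1 - t) + (4 / 3 - Real.log 2) * t)
  | (j + 4) => fun t =>
      (((j : ℝ) + 3) / (2 * π)) * berg (j + 2) t
        + (((j : ℝ) + 3) / (2 * π * ((j : ℝ) + 1))) * t * deriv (berg (j + 2)) t
        + (((j : ℝ) + 3) / (2 * π * sphereVol (j + 2))) * t

/-! ### Auxiliary power series : `Kf s = cos (√s)` and `Sf s = sin (√s)/√s` -/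

noncomputable def cK : ℕ → ℝ := fun n => (-1)^n / (2*n).factorial
noncomputable def cS : ℕ → ℝ := fun n => (-1)^n / (2*n+1).factorial
noncomputable def Kf : ℝ → ℝ := FormalMultilinearSeries.ofScalarsSum cK
noncomputable def Sf : ℝ → ℝ := FormalMultilinearSeries.ofScalarsSum cS

lemma ratio_tendsto_zero (g : ℕ → ℕ) (hg : ∀ n, n + 1 ≤ g n) (c : ℕ → ℝ)
    (hc : ∀ n, ‖c (n+1)‖ / ‖c n‖ = 1 / (g n : ℝ)) :
    Tendsto (fun n => ‖c (n+1)‖ / ‖c n‖) atTop (𝓝 0) := by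
  have h0 : Tendsto (fun n : ℕ => 1 / ((n:ℝ) + 1)) atTop (𝓝 0) :=
    tendsto_one_div_add_atTop_nhds_zero_nat
  refine squeeze_zero (fun n => by positivity) (fun n => ?_) h0
  rw [hc n]
  apply one_div_le_one_div_of_le (by positivity)
  exact_mod_cast hg n

lemma cK_ratio (n : ℕ) : ‖cK (n+1)‖ / ‖cK n‖ = 1 / (((2*n+1)*(2*n+2) : ℕ) : ℝ) := by
  have h2 : ((2*n).factorial : ℝ) ≠ 0 := by positivity
  have h1 : 2*(n+1) = ((2*n)+1)+1 := by ring
  simp only [cK, norm_div, norm_pow, norm_neg, norm_one, one_pow, Real.norm_natCast, h1,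
    Nat.factorial_succ]
  push_cast
  field_simp
  ring

lemma cS_ratio (n : ℕ) : ‖cS (n+1)‖ / ‖cS n‖ = 1 / (((2*n+2)*(2*n+3) : ℕ) : ℝ) := by
  have h2 : ((2*n+1).factorial : ℝ) ≠ 0 := by positivity
  have h1 : 2*(n+1)+1 = ((2*n+1)+1)+1 := by ring
  simp only [cS, norm_div, norm_pow, norm_neg, norm_one, one_pow, Real.norm_natCast, h1,
    Nat.factorial_succ]
  push_cast
  field_simp
  ring

lemma cK_radius : (FormalMultilinearSeries.ofScalars ℝ cK).radius = ⊤ := by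
  apply FormalMultilinearSeries.ofScalars_radius_eq_top_of_tendsto
  · exact Eventually.of_forall fun n => by simp [cK]; positivity
  · exact ratio_tendsto_zero _ (fun n => by nlinarith [Nat.zero_le n]) _ cK_ratio

lemma cS_radius : (FormalMultilinearSeries.ofScalars ℝ cS).radius = ⊤ := by
  apply FormalMultilinearSeries.ofScalars_radius_eq_top_of_tendsto
  · exact Eventually.of_forall fun n => by simp [cS]; positivity
  · exact ratio_tendsto_zero _ (fun n => by nlinarith [Nat.zero_le n]) _ cS_ratio

lemma Kf_hasFPowerSeries : HasFPowerSeriesAt Kf (FormalMultilinearSeries.ofScalars ℝ cK) 0 := by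
  have := (FormalMultilinearSeries.ofScalars ℝ cK).hasFPowerSeriesOnBall
    (by rw [cK_radius]; exact ENNReal.zero_lt_top)
  exact this.hasFPowerSeriesAt

lemma Sf_hasFPowerSeries : HasFPowerSeriesAt Sf (FormalMultilinearSeries.ofScalars ℝ cS) 0 := by
  have := (FormalMultilinearSeries.ofScalars ℝ cS).hasFPowerSeriesOnBall
    (by rw [cS_radius]; exact ENNReal.zero_lt_top)
  exact this.hasFPowerSeriesAt

lemma Kf_analytic : AnalyticAt ℝ Kf 0 := Kf_hasFPowerSeries.analyticAt
lemma Sf_analytic : AnalyticAt ℝ Sf 0 := Sf_hasFPowerSeries.analyticAt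

lemma Kf_eq (x : ℝ) : Kf x = ∑' n, cK n * x^n := by
  simpa [Kf, smul_eq_mul] using FormalMultilinearSeries.ofScalars_sum_eq cK x

lemma Sf_eq (x : ℝ) : Sf x = ∑' n, cS n * x^n := by
  simpa [Sf, smul_eq_mul] using FormalMultilinearSeries.ofScalars_sum_eq cS x

lemma Kf_cos (θ : ℝ) : Kf (θ^2) = Real.cos θ := by
  rw [Kf_eq, Real.cos_eq_tsum]
  congr 1; funext n
  rw [cK, ← pow_mul]
  ring

lemma Sf_sin (θ : ℝ) : θ^2 * Sf (θ^2) = θ * Real.sin θ := by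
  rw [Sf_eq, ← tsum_mul_left]
  have h := (Real.hasSum_sin θ).mul_left θ
  rw [← h.tsum_eq]
  congr 1; funext n
  rw [cS, ← pow_mul]
  ring

lemma Kf_zero : Kf 0 = 1 := by
  rw [Kf, FormalMultilinearSeries.ofScalarsSum_zero]
  norm_num [cK]

lemma Kf_hasDerivAt : HasDerivAt Kf (-(1/2)) 0 := by
  have h := Kf_hasFPowerSeries.hasDerivAt
  have hv : ((FormalMultilinearSeries.ofScalars ℝ cK) 1 fun _ => (1:ℝ)) = -(1/2) := by
    rw [FormalMultilinearSeries.ofScalars_apply_eq]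
    norm_num [cK]
  rwa [hv] at h

/-! ### Local inverse `Lf` of `Kf` near `0`, with `Lf (cos θ) = θ²` -/

noncomputable def KE : ℝ ≃L[ℝ] ℝ :=
  ContinuousLinearEquiv.unitsEquivAut ℝ (Units.mk0 (-(1/2) : ℝ) (by norm_num))

lemma Kf_hasFDerivAt : HasFDerivAt Kf (KE : ℝ →L[ℝ] ℝ) 0 := by
  have h := Kf_hasDerivAt.hasFDerivAt
  refine h.congr_fderiv ?_
  ext; simp [KE]

lemma Kf_contDiffAt : ContDiffAt ℝ ⊤ Kf 0 := Kf_analytic.contDiffAt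

noncomputable def Lf : ℝ → ℝ := Kf_contDiffAt.localInverse Kf_hasFDerivAt (by simp)

lemma Lf_analytic : AnalyticAt ℝ Lf 1 := by
  have h := Kf_contDiffAt.to_localInverse (f' := KE) Kf_hasFDerivAt (by simp)
  rw [Kf_zero] at h
  exact h.analyticAt

lemma Lf_one : Lf 1 = 0 := by
  have h := Kf_contDiffAt.localInverse_apply_image (f' := KE) Kf_hasFDerivAt (by simp)
  rwa [Kf_zero] at h

lemma Lf_left_inv : ∀ᶠ s in 𝓝 (0:ℝ), Lf (Kf s) = s :=
  (Kf_contDiffAt.hasStrictFDerivAt' Kf_hasFDerivAt (by simp)).eventually_left_inverse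

lemma Lf_cos : ∀ᶠ θ in 𝓝 (0:ℝ), Lf (Real.cos θ) = θ^2 := by
  have hsq : Tendsto (fun θ : ℝ => θ^2) (𝓝 0) (𝓝 0) := by
    have := (continuous_pow 2 (M := ℝ)).continuousAt (x := 0)
    simpa using this.tendsto
  filter_upwards [hsq.eventually Lf_left_inv] with θ hθ
  rw [← Kf_cos θ]
  exact hθ

/-! ### Smooth extensions of `berg 2` and `berg 3` near `-1` -/

noncomputable def G2 : ℝ → ℝ := fun t => (1/(2*π)) * (Lf (-t) * Sf (Lf (-t))) - t/(4*π)

lemma Lfneg_analytic : AnalyticAt ℝ (fun t : ℝ => Lf (-t)) (-1) := by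
  have hneg : AnalyticAt ℝ (fun t : ℝ => -t) (-1) := analyticAt_id.neg
  have h1 : AnalyticAt ℝ Lf ((fun t : ℝ => -t) (-1)) := by
    show AnalyticAt ℝ Lf (-(-1:ℝ)); rw [neg_neg]; exact Lf_analytic
  simpa [Function.comp_def] using h1.comp hneg

lemma G2_analytic : AnalyticAt ℝ G2 (-1) := by
  have hL := Lfneg_analytic
  have h2 : AnalyticAt ℝ Sf ((fun t : ℝ => Lf (-t)) (-1)) := by
    show AnalyticAt ℝ Sf (Lf (-(-1:ℝ))); rw [neg_neg, Lf_one]; exact Sf_analytic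
  have hS : AnalyticAt ℝ (fun t : ℝ => Sf (Lf (-t))) (-1) := by
    simpa [Function.comp_def] using AnalyticAt.comp (g := Sf) (f := fun t : ℝ => Lf (-t)) h2 hL
  exact ((analyticAt_const.mul (hL.mul hS)).sub (analyticAt_id.mul analyticAt_const))

lemma G2_eq_berg : ∃ ε > (0:ℝ), ε ≤ 2 ∧ ∀ t ∈ Ioo (-1:ℝ) (-1+ε), berg 2 t = G2 t := by
  have hc : ContinuousAt (fun t : ℝ => Real.arccos (-t)) (-1) :=
    Real.continuous_arccos.continuousAt.comp continuousAt_id.neg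
  have hev : ∀ᶠ t in 𝓝 (-1:ℝ), Lf (Real.cos (Real.arccos (-t))) = (Real.arccos (-t))^2 := by
    have h3 := hc.tendsto
    simp only [neg_neg, Real.arccos_one] at h3
    exact h3.eventually Lf_cos
  rcases Metric.eventually_nhds_iff.1 hev with ⟨δ, hδ, hball⟩
  refine ⟨min δ 2, by positivity, min_le_right _ _, fun t ht => ?_⟩
  obtain ⟨ht1, ht2⟩ := ht
  have htlt : t < 1 := by
    have := min_le_right δ 2; nlinarith [min_le_right δ 2]
  have htmem : -t ∈ Icc (-1:ℝ) 1 := ⟨by linarith, by linarith⟩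
  have hdist : dist t (-1) < δ := by
    rw [Real.dist_eq, abs_lt]
    constructor <;> nlinarith [min_le_left δ 2]
  have hL : Lf (-t) = (Real.arccos (-t))^2 := by
    have := hball hdist
    rwa [Real.cos_arccos htmem.1 htmem.2] at this
  set θ := Real.arccos (-t) with hθ
  have hsinθ : Real.sin θ = Real.sqrt (1 - t^2) := by
    rw [hθ, Real.sin_arccos]; norm_num
  have harc : π - Real.arccos t = θ := by
    rw [hθ, Real.arccos_neg]
  show (1 / (2 * π)) * (π - Real.arccos t) * Real.sqrt (1 - t ^ 2) - t / (4 * π) = G2 t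
  rw [harc, ← hsinθ, G2, hL, Sf_sin θ]
  ring

lemma analyticAt_rlog {x : ℝ} (hx : 0 < x) : AnalyticAt ℝ Real.log x := by
  have hre : (fun y : ℝ => (Complex.log (y:ℂ)).re) = Real.log := by
    funext y; exact Complex.log_ofReal_re y
  rw [← hre]
  have h1 : AnalyticAt ℝ (fun y : ℝ => Complex.log (y:ℂ)) x := by
    have hc : AnalyticAt ℂ Complex.log (x:ℂ) :=
      analyticAt_clog (Complex.ofReal_mem_slitPlane.2 hx)
    have hr : AnalyticAt ℝ Complex.log ((x:ℝ):ℂ) := hc.restrictScalars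
    have hof : AnalyticAt ℝ (fun y : ℝ => (y:ℂ)) x := Complex.ofRealCLM.analyticAt x
    simpa [Function.comp_def] using hr.comp hof
  exact (Complex.reCLM.analyticAt _).comp h1

lemma G3_analytic : AnalyticAt ℝ (berg 3) (-1) := by
  show AnalyticAt ℝ
    (fun t => (1 / (2 * π)) * (1 + t * Real.log (1 - t) + (4 / 3 - Real.log 2) * t)) (-1)
  have hl : AnalyticAt ℝ (fun t : ℝ => Real.log (1 - t)) (-1) := by
    have h2 : AnalyticAt ℝ Real.log ((fun t : ℝ => 1 - t) (-1)) := by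
      show AnalyticAt ℝ Real.log (1 - (-1:ℝ))
      norm_num
      exact analyticAt_rlog (by norm_num)
    have hin : AnalyticAt ℝ (fun t : ℝ => 1 - t) (-1) := analyticAt_const.sub analyticAt_id
    simpa [Function.comp_def] using h2.comp hin
  exact analyticAt_const.mul ((analyticAt_const.add (analyticAt_id.mul hl)).add
    (analyticAt_const.mul analyticAt_id))

/-! ### The ODEs satisfied by `berg 2` and `berg 3` -/

lemma berg2_ode : ∀ t ∈ Ioo (-1:ℝ) 1,
    (1 - t^2) * deriv (berg 2) t + t * (berg 2 t) = (1 - 2*t^2) / (4*π) := by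
  have hb2 : berg 2 = fun t => (1 / (2 * π)) * (π - Real.arccos t) * Real.sqrt (1 - t ^ 2)
      - t / (4 * π) := rfl
  rw [hb2]
  intro t ht
  obtain ⟨h1, h2⟩ := ht
  have hu : (0:ℝ) < 1 - t^2 := by nlinarith
  have hs0 : Real.sqrt (1 - t^2) ≠ 0 := by positivity
  have hsq : Real.sqrt (1 - t^2) ^ 2 = 1 - t^2 := Real.sq_sqrt (le_of_lt hu)
  have hA : HasDerivAt Real.arccos (-(1 / Real.sqrt (1 - t ^ 2))) t :=
    Real.hasDerivAt_arccos (by linarith) (ne_of_lt h2)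
  have hinner : HasDerivAt (fun t : ℝ => 1 - t^2) (-(2*t)) t := by
    simpa using ((hasDerivAt_pow 2 t).const_sub 1)
  have hsqrt : HasDerivAt (fun t : ℝ => Real.sqrt (1 - t^2))
      (-(2*t) / (2 * Real.sqrt (1 - t^2))) t := by
    have h := (Real.hasDerivAt_sqrt (ne_of_gt hu)).comp t hinner
    refine h.congr_deriv ?_
    ring
  have hfull : HasDerivAt (fun t : ℝ => (1 / (2 * π)) * (π - Real.arccos t) * Real.sqrt (1 - t ^ 2) - t / (4 * π))
      ((1 / (2 * π)) * (1 / Real.sqrt (1 - t ^ 2)) * Real.sqrt (1 - t^2)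
        + (1 / (2 * π)) * (π - Real.arccos t) * (-(2*t) / (2 * Real.sqrt (1 - t^2)))
        - 1 / (4*π)) t := by
    have hprod : HasDerivAt (fun t : ℝ => (1 / (2 * π)) * (π - Real.arccos t) * Real.sqrt (1 - t ^ 2))
        ((1 / (2 * π)) * (1 / Real.sqrt (1 - t ^ 2)) * Real.sqrt (1 - t^2)
          + (1 / (2 * π)) * (π - Real.arccos t) * (-(2*t) / (2 * Real.sqrt (1 - t^2)))) t := by
      have hc : HasDerivAt (fun t : ℝ => (1 / (2 * π)) * (π - Real.arccos t))
          ((1 / (2 * π)) * (1 / Real.sqrt (1 - t ^ 2))) t := by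
        have := (hA.const_sub π).const_mul (1 / (2 * π))
        refine this.congr_deriv ?_
        ring
      exact hc.mul hsqrt
    have hlin : HasDerivAt (fun t : ℝ => t / (4*π)) (1/(4*π)) t := by
      simpa using (hasDerivAt_id t).div_const (4*π)
    exact hprod.sub hlin
  rw [hfull.deriv]
  have hπ : π ≠ 0 := Real.pi_ne_zero
  set s := Real.sqrt (1 - t^2) with hs
  rw [← hsq]
  set A := Real.arccos t with hA2
  field_simp
  linear_combination 2 * hsq

lemma berg3_ode : ∀ t ∈ Ioo (-1:ℝ) 1,
    (t^2 - t) * deriv (berg 3) t + (1 - t) * (berg 3 t) = (t^2 - t + 1) / (2*π) := by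
  have hb3 : berg 3 = fun t => (1 / (2 * π)) * (1 + t * Real.log (1 - t)
      + (4 / 3 - Real.log 2) * t) := rfl
  rw [hb3]
  intro t ht
  obtain ⟨h1, h2⟩ := ht
  have h1t : (1:ℝ) - t ≠ 0 := by linarith
  have hπ : π ≠ 0 := Real.pi_ne_zero
  have hlog : HasDerivAt (fun t : ℝ => Real.log (1 - t)) (-(1/(1-t))) t := by
    have hinner : HasDerivAt (fun t : ℝ => 1 - t) (-1) t := by
      simpa using (hasDerivAt_id t).const_sub 1
    have := (Real.hasDerivAt_log h1t).comp t hinner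
    refine this.congr_deriv ?_
    field_simp
  have hd : HasDerivAt (fun t : ℝ => (1 / (2 * π)) * (1 + t * Real.log (1 - t) + (4 / 3 - Real.log 2) * t))
      ((1 / (2 * π)) * ((1 * Real.log (1 - t) + t * (-(1/(1-t)))) + (4 / 3 - Real.log 2))) t := by
    have hm : HasDerivAt (fun t : ℝ => t * Real.log (1 - t))
        (1 * Real.log (1 - t) + t * (-(1/(1-t)))) t := (hasDerivAt_id t).mul hlog
    have hc : HasDerivAt (fun t : ℝ => (4 / 3 - Real.log 2) * t) (4 / 3 - Real.log 2) t := by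
      simpa using (hasDerivAt_id t).const_mul (4 / 3 - Real.log 2)
    exact ((hm.const_add 1).add hc).const_mul _
  rw [hd.deriv]
  field_simp
  ring

/-! ### Generic machinery : analyticity of iterated derivatives, Leibniz-type identities -/

lemma analyticAt_deriv {f : ℝ → ℝ} {x : ℝ} (hf : AnalyticAt ℝ f x) :
    AnalyticAt ℝ (deriv f) x :=
  (AnalyticOnNhd.deriv (s := {y | AnalyticAt ℝ f y}) (fun _ hz => hz)) x hf

lemma analyticAt_iteratedDeriv {f : ℝ → ℝ} {x : ℝ} (hf : AnalyticAt ℝ f x) (n : ℕ) :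
    AnalyticAt ℝ (iteratedDeriv n f) x := by
  rw [iteratedDeriv_eq_iterate]
  exact (AnalyticOnNhd.iterated_deriv (s := {y | AnalyticAt ℝ f y}) (fun _ hz => hz) n) x hf

lemma hasDerivAt_iteratedDeriv {f : ℝ → ℝ} {y : ℝ} (hy : AnalyticAt ℝ f y) (m : ℕ) :
    HasDerivAt (iteratedDeriv m f) (iteratedDeriv (m+1) f y) y := by
  have h := (analyticAt_iteratedDeriv hy m).differentiableAt.hasDerivAt
  rwa [iteratedDeriv_succ]

/-- the polynomial part and its successive derivatives -/
noncomputable def Pq (r0 r1 r2 : ℝ) : ℕ → ℝ → ℝ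
  | 0 => fun x => r0 + r1*x + r2*x^2
  | 1 => fun x => r1 + 2*r2*x
  | 2 => fun _ => 2*r2
  | (_+3) => fun _ => 0

lemma Pq_hasDerivAt (r0 r1 r2 : ℝ) (n : ℕ) (y : ℝ) :
    HasDerivAt (Pq r0 r1 r2 n) (Pq r0 r1 r2 (n+1) y) y := by
  match n with
  | 0 =>
    show HasDerivAt (fun x => r0 + r1*x + r2*x^2) (r1 + 2*r2*y) y
    have := (((hasDerivAt_id y).const_mul r1).const_add r0).add ((hasDerivAt_pow 2 y).const_mul r2)
    refine this.congr_deriv ?_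
    push_cast; ring
  | 1 =>
    show HasDerivAt (fun x => r1 + 2*r2*x) (2*r2) y
    simpa using ((hasDerivAt_id y).const_mul (2*r2)).const_add r1
  | 2 => exact hasDerivAt_const y _
  | (m+3) => exact hasDerivAt_const y _

theorem master_ev {f : ℝ → ℝ} {x : ℝ} (hf : AnalyticAt ℝ f x) (a b c d e r0 r1 r2 : ℝ) :
    ∀ n : ℕ, iteratedDeriv n
        (fun t => (a + b*t + c*t^2) * deriv f t + (d + e*t) * f t + Pq r0 r1 r2 0 t)
      =ᶠ[𝓝 x] fun t => (a + b*t + c*t^2) * iteratedDeriv (n+1) f t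
        + ((n:ℝ)*(b + 2*c*t) + (d + e*t)) * iteratedDeriv n f t
        + ((n:ℝ)*((n:ℝ)-1)*c + (n:ℝ)*e) * iteratedDeriv (n-1) f t
        + Pq r0 r1 r2 n t := by
  intro n
  induction n with
  | zero =>
    refine Eventually.of_forall fun t => ?_
    simp only [iteratedDeriv_zero, zero_add, iteratedDeriv_one, Nat.cast_zero]
    ring
  | succ n IH =>
    rw [iteratedDeriv_succ]
    refine (IH.deriv).trans ?_
    refine hf.eventually_analyticAt.mono fun y hy => ?_
    have hq1 : HasDerivAt (fun t : ℝ => a + b*t + c*t^2) (b + 2*c*y) y := by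
      have := (((hasDerivAt_id y).const_mul b).const_add a).add ((hasDerivAt_pow 2 y).const_mul c)
      refine this.congr_deriv ?_
      push_cast; ring
    have hq2 : HasDerivAt (fun t : ℝ => (n:ℝ)*(b + 2*c*t) + (d + e*t)) ((n:ℝ)*(2*c) + e) y := by
      have h1 : HasDerivAt (fun t : ℝ => b + 2*c*t) (2*c) y := by
        simpa using ((hasDerivAt_id y).const_mul (2*c)).const_add b
      have h2 : HasDerivAt (fun t : ℝ => d + e*t) e y := by
        simpa using ((hasDerivAt_id y).const_mul e).const_add d
      exact (h1.const_mul _).add h2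
    have hD := hasDerivAt_iteratedDeriv hy
    have hfull : HasDerivAt (fun t => (a + b*t + c*t^2) * iteratedDeriv (n+1) f t
        + ((n:ℝ)*(b + 2*c*t) + (d + e*t)) * iteratedDeriv n f t
        + ((n:ℝ)*((n:ℝ)-1)*c + (n:ℝ)*e) * iteratedDeriv (n-1) f t
        + Pq r0 r1 r2 n t)
        (((b + 2*c*y) * iteratedDeriv (n+1) f y + (a + b*y + c*y^2) * iteratedDeriv (n+2) f y)
         + (((n:ℝ)*(2*c) + e) * iteratedDeriv n f y
            + ((n:ℝ)*(b + 2*c*y) + (d + e*y)) * iteratedDeriv (n+1) f y)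
         + ((n:ℝ)*((n:ℝ)-1)*c + (n:ℝ)*e) * iteratedDeriv (n-1+1) f y
         + Pq r0 r1 r2 (n+1) y) y := by
      exact (((hq1.mul (hD (n+1))).add ((hq2.mul (hD n)))).add
          ((hD (n-1)).const_mul _)).add (Pq_hasDerivAt r0 r1 r2 n y)
    rw [hfull.deriv]
    match n with
    | 0 => push_cast; ring
    | (m+1) =>
      have hidx : (m+1-1+1) = m+1 := by omega
      rw [hidx]
      have hidx2 : (m+1+1-1) = m+1 := by omega
      rw [hidx2]
      push_cast; ring

lemma jets_zero {f : ℝ → ℝ} {x b : ℝ} (hxb : x < b) (hf : AnalyticAt ℝ f x)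
    (h0 : ∀ t ∈ Ioo x b, f t = 0) : ∀ n, iteratedDeriv n f x = 0 := by
  intro n
  induction n generalizing f with
  | zero =>
    rw [iteratedDeriv_zero]
    have hne : (𝓝[Ioo x b] x).NeBot := by
      apply mem_closure_iff_nhdsWithin_neBot.1
      rw [closure_Ioo (ne_of_lt hxb)]
      exact ⟨le_refl x, le_of_lt hxb⟩
    have h1 : Tendsto f (𝓝[Ioo x b] x) (𝓝 (f x)) :=
      (hf.continuousAt.continuousWithinAt).tendsto
    have h2 : Tendsto f (𝓝[Ioo x b] x) (𝓝 0) := by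
      refine Tendsto.congr' ?_ tendsto_const_nhds
      filter_upwards [self_mem_nhdsWithin] with t ht
      exact (h0 t ht).symm
    exact tendsto_nhds_unique h1 h2
  | succ n IH =>
    rw [iteratedDeriv_succ']
    refine IH (analyticAt_deriv hf) fun t ht => ?_
    have heq : f =ᶠ[𝓝 t] (fun _ => (0:ℝ)) := by
      filter_upwards [isOpen_Ioo.mem_nhds ht] with s hs
      exact h0 s hs
    rw [heq.deriv_eq, deriv_const]

/-! ### `sphereVol` computations -/

lemma sphereVol_pos {j : ℕ} (hj : 1 ≤ j) : 0 < sphereVol j := by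
  have h1 : (0:ℝ) < (j:ℝ)/2 := by positivity
  have h2 : 0 < Real.Gamma ((j:ℝ)/2) := Real.Gamma_pos_of_pos h1
  have h3 : (0:ℝ) < π ^ ((j : ℝ) / 2) := Real.rpow_pos_of_pos Real.pi_pos _
  rw [sphereVol]; positivity

lemma sphereVol_two : sphereVol 2 = 2 * π := by
  rw [sphereVol]
  norm_num [Real.Gamma_one, Real.rpow_one]

lemma sphereVol_three : sphereVol 3 = 4 * π := by
  rw [sphereVol]
  have h1 : ((3:ℕ):ℝ)/2 = 1/2 + 1 := by norm_num
  rw [h1, Real.Gamma_add_one (by norm_num), Real.Gamma_one_half_eq]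
  have h2 : π ^ ((1:ℝ)/2 + 1) = Real.sqrt π * π := by
    rw [Real.rpow_add Real.pi_pos, Real.rpow_one, ← Real.sqrt_eq_rpow]
  rw [h2]
  have h3 : Real.sqrt π ≠ 0 := by positivity
  field_simp
  ring

lemma sphereVol_rec {j : ℕ} (hj : 1 ≤ j) : sphereVol (j+2) = 2 * π * sphereVol j / (j:ℝ) := by
  have hj0 : ((j:ℝ)/2) ≠ 0 := by positivity
  have hg : 0 < Real.Gamma ((j:ℝ)/2) := Real.Gamma_pos_of_pos (by positivity)
  have h1 : ((j+2:ℕ):ℝ)/2 = (j:ℝ)/2 + 1 := by push_cast; ring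
  rw [sphereVol, sphereVol, h1, Real.Gamma_add_one hj0, Real.rpow_add Real.pi_pos, Real.rpow_one]
  have hj' : (j:ℝ) ≠ 0 := by positivity
  field_simp

/-! ### The inductive invariant -/

def Good (j : ℕ) : Prop := ∃ (G : ℝ → ℝ) (ε : ℝ), 0 < ε ∧ ε ≤ 2 ∧ AnalyticAt ℝ G (-1) ∧
  (∀ t ∈ Ioo (-1:ℝ) (-1+ε), berg j t = G t) ∧
  iteratedDeriv 1 G (-1) = (j:ℝ)/sphereVol j - iteratedDeriv 0 G (-1) ∧
  iteratedDeriv 2 G (-1) = -((j:ℝ)*((j:ℝ)-1))/(((j:ℝ)+1)*sphereVol j) ∧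
  ∀ k : ℕ, 2 ≤ k → iteratedDeriv (k+1) G (-1)
    = (((k:ℝ)-1)*((k:ℝ)+(j:ℝ)-1))/(2*(k:ℝ)+(j:ℝ)-1) * iteratedDeriv k G (-1)

theorem good_two : Good 2 := by
  obtain ⟨ε, hε, hε2, hEq⟩ := G2_eq_berg
  set F : ℝ → ℝ := fun t => ((1:ℝ) + 0*t + (-1)*t^2) * deriv G2 t + ((0:ℝ) + 1*t) * G2 t
      + Pq (-(1/(4*π))) 0 (1/(2*π)) 0 t with hF
  have hπ : π ≠ 0 := Real.pi_ne_zero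
  have hFz : ∀ t ∈ Ioo (-1:ℝ) (-1+ε), F t = 0 := by
    intro t ht
    have ht1 : t ∈ Ioo (-1:ℝ) 1 := ⟨ht.1, by have := ht.2; linarith⟩
    have hde : deriv (berg 2) t = deriv G2 t := by
      apply Filter.EventuallyEq.deriv_eq
      filter_upwards [isOpen_Ioo.mem_nhds ht] with s hs
      exact hEq s hs
    have hode := berg2_ode t ht1
    rw [hde, hEq t ht] at hode
    rw [hF]
    show ((1:ℝ) + 0*t + (-1)*t^2) * deriv G2 t + ((0:ℝ) + 1*t) * G2 t
      + (-(1/(4*π)) + 0*t + (1/(2*π))*t^2) = 0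
    linear_combination hode
  have hFa : AnalyticAt ℝ F (-1) := by
    apply AnalyticAt.add
    apply AnalyticAt.add
    · exact ((analyticAt_const.add ((analyticAt_const.mul analyticAt_id))).add
        (analyticAt_const.mul (analyticAt_id.pow 2))).mul (analyticAt_deriv G2_analytic)
    · exact (analyticAt_const.add (analyticAt_const.mul analyticAt_id)).mul G2_analytic
    · show AnalyticAt ℝ (fun x : ℝ => -(1/(4*π)) + 0*x + (1/(2*π))*x^2) (-1)
      exact (analyticAt_const.add ((analyticAt_const.mul analyticAt_id))).add
        (analyticAt_const.mul (analyticAt_id.pow 2))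
  have hjets := jets_zero (by linarith : (-1:ℝ) < -1+ε) hFa hFz
  have key : ∀ n : ℕ, (0:ℝ) = ((1:ℝ) + 0*(-1) + (-1)*(-1)^2) * iteratedDeriv (n+1) G2 (-1)
        + ((n:ℝ)*(0 + 2*(-1)*(-1)) + (0 + 1*(-1))) * iteratedDeriv n G2 (-1)
        + ((n:ℝ)*((n:ℝ)-1)*(-1) + (n:ℝ)*1) * iteratedDeriv (n-1) G2 (-1)
        + Pq (-(1/(4*π))) 0 (1/(2*π)) n (-1) := by
    intro n
    have h1 := (master_ev G2_analytic 1 0 (-1) 0 1 (-(1/(4*π))) 0 (1/(2*π)) n).eq_of_nhds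
    rw [← hF] at h1
    rw [← h1, hjets n]
  refine ⟨G2, ε, hε, hε2, G2_analytic, hEq, ?_, ?_, ?_⟩
  · have h := key 1
    have hp : Pq (-(1/(4*π))) 0 (1/(2*π)) 1 (-1) = -(1/π) := by
      show (0 : ℝ) + 2*(1/(2*π))*(-1) = -(1/π); field_simp; ring
    rw [hp] at h
    norm_num at h
    rw [sphereVol_two]
    push_cast
    field_simp at h ⊢
    rw [iteratedDeriv_one, iteratedDeriv_zero]
    linarith
  · have h := key 2
    have hp : Pq (-(1/(4*π))) 0 (1/(2*π)) 2 (-1) = 1/π := by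
      show (2*(1/(2*π)) : ℝ) = 1/π; field_simp
    rw [hp] at h
    norm_num at h
    rw [sphereVol_two]
    push_cast
    field_simp at h ⊢
    linarith
  · intro k hk
    have h := key (k+1)
    have hp : Pq (-(1/(4*π))) 0 (1/(2*π)) (k+1) (-1) = 0 := by
      obtain ⟨m, rfl⟩ : ∃ m, k = m + 2 := ⟨k - 2, by omega⟩
      rfl
    have hidx : (k+1-1) = k := by omega
    rw [hp, hidx] at h
    norm_num at h
    push_cast at h ⊢
    have hden : 2*(k:ℝ) + 2 - 1 ≠ 0 := by
      have : (2:ℝ) ≤ (k:ℝ) := by exact_mod_cast hk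
      linarith
    rw [div_mul_eq_mul_div, eq_div_iff (by linarith)]
    linarith [h]

theorem good_three : Good 3 := by
  set F : ℝ → ℝ := fun t => ((0:ℝ) + (-1)*t + 1*t^2) * deriv (berg 3) t
      + ((1:ℝ) + (-1)*t) * (berg 3) t
      + Pq (-(1/(2*π))) (1/(2*π)) (-(1/(2*π))) 0 t with hF
  have hπ : π ≠ 0 := Real.pi_ne_zero
  have hFz : ∀ t ∈ Ioo (-1:ℝ) (-1+2), F t = 0 := by
    intro t ht
    have ht1 : t ∈ Ioo (-1:ℝ) 1 := ⟨ht.1, by have := ht.2; linarith⟩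
    have hode := berg3_ode t ht1
    show ((0:ℝ) + (-1)*t + 1*t^2) * deriv (berg 3) t + ((1:ℝ) + (-1)*t) * (berg 3) t
      + (-(1/(2*π)) + (1/(2*π))*t + (-(1/(2*π)))*t^2) = 0
    linear_combination hode
  have hFa : AnalyticAt ℝ F (-1) := by
    apply AnalyticAt.add
    apply AnalyticAt.add
    · exact ((analyticAt_const.add ((analyticAt_const.mul analyticAt_id))).add
        (analyticAt_const.mul (analyticAt_id.pow 2))).mul (analyticAt_deriv G3_analytic)
    · exact (analyticAt_const.add (analyticAt_const.mul analyticAt_id)).mul G3_analytic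
    · show AnalyticAt ℝ (fun x : ℝ => -(1/(2*π)) + (1/(2*π))*x + (-(1/(2*π)))*x^2) (-1)
      exact (analyticAt_const.add ((analyticAt_const.mul analyticAt_id))).add
        (analyticAt_const.mul (analyticAt_id.pow 2))
  have hjets := jets_zero (by linarith : (-1:ℝ) < -1+2) hFa hFz
  have key : ∀ n : ℕ, (0:ℝ) = ((0:ℝ) + (-1)*(-1) + 1*(-1)^2) * iteratedDeriv (n+1) (berg 3) (-1)
        + ((n:ℝ)*((-1) + 2*1*(-1)) + (1 + (-1)*(-1))) * iteratedDeriv n (berg 3) (-1)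
        + ((n:ℝ)*((n:ℝ)-1)*1 + (n:ℝ)*(-1)) * iteratedDeriv (n-1) (berg 3) (-1)
        + Pq (-(1/(2*π))) (1/(2*π)) (-(1/(2*π))) n (-1) := by
    intro n
    have h1 := (master_ev G3_analytic 0 (-1) 1 1 (-1) (-(1/(2*π))) (1/(2*π)) (-(1/(2*π))) n).eq_of_nhds
    rw [← hF] at h1
    rw [← h1, hjets n]
  have k0 := key 0
  have hp0 : Pq (-(1/(2*π))) (1/(2*π)) (-(1/(2*π))) 0 (-1) = -(3/(2*π)) := by
    show (-(1/(2*π)) + (1/(2*π))*(-1) + (-(1/(2*π)))*(-1)^2 : ℝ) = -(3/(2*π)); field_simp; ring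
  rw [hp0] at k0; norm_num at k0
  have k1 := key 1
  have hp1 : Pq (-(1/(2*π))) (1/(2*π)) (-(1/(2*π))) 1 (-1) = 3/(2*π) := by
    show ((1/(2*π)) + 2*(-(1/(2*π)))*(-1) : ℝ) = 3/(2*π); field_simp; ring
  rw [hp1] at k1; norm_num at k1
  have k2 := key 2
  have hp2 : Pq (-(1/(2*π))) (1/(2*π)) (-(1/(2*π))) 2 (-1) = -(1/π) := by
    show (2*(-(1/(2*π))) : ℝ) = -(1/π); field_simp
  rw [hp2] at k2; norm_num at k2
  have krec : ∀ n : ℕ, 3 ≤ n → (0:ℝ) = 2 * iteratedDeriv (n+1) (berg 3) (-1)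
      + (2 - 3*(n:ℝ)) * iteratedDeriv n (berg 3) (-1)
      + ((n:ℝ)*((n:ℝ)-1) - (n:ℝ)) * iteratedDeriv (n-1) (berg 3) (-1) := by
    intro n hn
    have h := key n
    have hp : Pq (-(1/(2*π))) (1/(2*π)) (-(1/(2*π))) n (-1) = 0 := by
      obtain ⟨m, rfl⟩ : ∃ m, n = m + 3 := ⟨n - 3, by omega⟩
      rfl
    rw [hp] at h
    linarith [h]
  refine ⟨berg 3, 2, by norm_num, le_refl 2, G3_analytic, fun t ht => rfl, ?_, ?_, ?_⟩
  · rw [sphereVol_three]; push_cast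
    field_simp at k0 ⊢
    rw [iteratedDeriv_one, iteratedDeriv_zero]
    linarith
  · rw [sphereVol_three]; push_cast
    field_simp at k0 k1 ⊢
    linarith
  · have m2 : iteratedDeriv 2 (berg 3) (-1) = -(3/(8*π)) := by
      field_simp at k0 k1 ⊢; linarith
    intro k hk
    induction k, hk using Nat.le_induction with
    | base =>
      push_cast
      linear_combination (-1/2:ℝ)*k2 + (4/3:ℝ)*m2
    | succ k hk IH =>
      have hrec := krec (k+1) (by omega)
      have hidx : (k+1-1) = k := by omega
      rw [hidx] at hrec
      push_cast at IH hrec ⊢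
      have hkR : (2:ℝ) ≤ (k:ℝ) := by exact_mod_cast hk
      have h3 : (2*(k:ℝ)+3-1) ≠ 0 := by linarith
      have IHp : (2*(k:ℝ)+3-1) * iteratedDeriv (k+1) (berg 3) (-1)
          = (((k:ℝ)-1)*((k:ℝ)+3-1)) * iteratedDeriv k (berg 3) (-1) := by
        rw [IH]; field_simp
      rw [div_mul_eq_mul_div, eq_div_iff (show 2*((k:ℝ)+1)+3-1 ≠ 0 by linarith)]
      linear_combination (-((k:ℝ)+2)) * hrec + ((k:ℝ)+1) * IHp

set_option maxHeartbeats 1000000 in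
theorem good_step (j : ℕ) (hj : 2 ≤ j) (h : Good j) : Good (j+2) := by
  obtain ⟨G, ε, hε, hε2, hGa, hEq, hR1, hR3, hR2⟩ := h
  have hπ : (0:ℝ) < π := Real.pi_pos
  have hπ' : π ≠ 0 := ne_of_gt hπ
  have hjR2 : (2:ℝ) ≤ (j:ℝ) := by exact_mod_cast hj
  have hω : (0:ℝ) < sphereVol j := sphereVol_pos (by omega)
  have hω' : sphereVol j ≠ 0 := ne_of_gt hω
  have hrec := sphereVol_rec (j := j) (by omega)
  have hj1 : (j:ℝ) - 1 ≠ 0 := by linarith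
  have hj1' : (j:ℝ) + 1 ≠ 0 := by linarith
  have hj3 : (j:ℝ) + 3 ≠ 0 := by linarith
  have hj0 : (j:ℝ) ≠ 0 := by linarith
  set α : ℝ := ((j:ℝ)+1)/(2*π) with hα
  set β : ℝ := ((j:ℝ)+1)/(2*π*((j:ℝ)-1)) with hβ
  set γ : ℝ := ((j:ℝ)+1)/(2*π*sphereVol j) with hγ
  set G' : ℝ → ℝ := fun t => ((0:ℝ) + β*t + 0*t^2) * deriv G t + (α + 0*t) * G t + Pq 0 γ 0 0 t
    with hG'
  have hG'a : AnalyticAt ℝ G' (-1) := by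
    apply AnalyticAt.add
    apply AnalyticAt.add
    · exact ((analyticAt_const.add ((analyticAt_const.mul analyticAt_id))).add
        (analyticAt_const.mul (analyticAt_id.pow 2))).mul (analyticAt_deriv hGa)
    · exact (analyticAt_const.add (analyticAt_const.mul analyticAt_id)).mul hGa
    · show AnalyticAt ℝ (fun x : ℝ => 0 + γ*x + 0*x^2) (-1)
      exact (analyticAt_const.add ((analyticAt_const.mul analyticAt_id))).add
        (analyticAt_const.mul (analyticAt_id.pow 2))
  have hEq' : ∀ t ∈ Ioo (-1:ℝ) (-1+ε), berg (j+2) t = G' t := by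
    obtain ⟨m, rfl⟩ : ∃ m, j = m + 2 := ⟨j - 2, by omega⟩
    intro t ht
    have hde : deriv (berg (m+2)) t = deriv G t := by
      apply Filter.EventuallyEq.deriv_eq
      filter_upwards [isOpen_Ioo.mem_nhds ht] with s hs
      exact hEq s hs
    show (((m : ℝ) + 3) / (2 * π)) * berg (m + 2) t
        + (((m : ℝ) + 3) / (2 * π * ((m : ℝ) + 1))) * t * deriv (berg (m + 2)) t
        + (((m : ℝ) + 3) / (2 * π * sphereVol (m + 2))) * t = G' t
    rw [hde, hEq t ht, hG', hα, hβ, hγ]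
    show _ = (0 + (↑(m+2)+1)/(2*π*((↑(m+2):ℝ)-1))*t + 0*t^2) * deriv G t
      + ((↑(m+2)+1)/(2*π) + 0*t) * G t + (0 + (↑(m+2)+1)/(2*π*sphereVol (m+2))*t + 0*t^2)
    push_cast
    ring
  have key : ∀ n : ℕ, iteratedDeriv n G' (-1)
      = (0 + β*(-1) + 0*(-1)^2) * iteratedDeriv (n+1) G (-1)
        + ((n:ℝ)*(β + 2*0*(-1)) + (α + 0*(-1))) * iteratedDeriv n G (-1)
        + ((n:ℝ)*((n:ℝ)-1)*0 + (n:ℝ)*0) * iteratedDeriv (n-1) G (-1)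
        + Pq 0 γ 0 n (-1) := by
    intro n
    have h1 := (master_ev hGa 0 β 0 α 0 0 γ 0 n).eq_of_nhds
    rw [← hG'] at h1
    exact h1
  have hm3 : iteratedDeriv 3 G (-1)
      = ((2:ℝ)-1)*((2:ℝ)+(j:ℝ)-1)/(2*2+(j:ℝ)-1) * iteratedDeriv 2 G (-1) := by
    have h := hR2 2 (le_refl 2)
    norm_num at h ⊢
    exact h
  refine ⟨G', ε, hε, hε2, hG'a, hEq', ?_, ?_, ?_⟩
  · -- first derivative relation at j+2
    have k1 := key 1
    have k0 := key 0
    simp only [Pq] at k1 k0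
    norm_num at k1 k0
    rw [iteratedDeriv_one, iteratedDeriv_zero] at hR1 ⊢
    rw [k1, k0, hrec, hR1, hR3]
    push_cast
    rw [hα, hβ, hγ]
    field_simp
    ring
  · -- second derivative value at j+2
    have k2 := key 2
    simp only [Pq] at k2
    norm_num at k2
    have hd3 : (2*2+(j:ℝ)-1) ≠ 0 := by linarith
    have hm3v : iteratedDeriv 3 G (-1) = -((j:ℝ)*((j:ℝ)-1))/(((j:ℝ)+3)*sphereVol j) := by
      rw [hm3, hR3]
      have hd3'' : (2*2+(j:ℝ)-1) = j+3 := by ring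
      rw [hd3'']
      field_simp
      ring
    rw [k2, hm3v, hR3, hrec]
    push_cast
    rw [hα, hβ]
    have hj2' : (j:ℝ)+2 ≠ 0 := by linarith
    have hj21 : (j:ℝ)+2+1 ≠ 0 := by linarith
    field_simp
    ring
  · -- ratio relations at j+2
    intro k hk
    have hkR : (2:ℝ) ≤ (k:ℝ) := by exact_mod_cast hk
    have kk1 := key (k+1)
    have kk := key k
    have hpk1 : Pq 0 γ 0 (k+1) (-1) = 0 := by
      obtain ⟨i, rfl⟩ : ∃ i, k = i + 2 := ⟨k - 2, by omega⟩
      rfl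
    have hpk : Pq 0 γ 0 k (-1) = 0 := by
      rcases Nat.lt_or_ge k 3 with h3 | h3
      · obtain rfl : k = 2 := by omega
        show 2*(0:ℝ) = 0; ring
      · obtain ⟨i, rfl⟩ : ∃ i, k = i + 3 := ⟨k - 3, by omega⟩
        rfl
    rw [hpk1] at kk1
    rw [hpk] at kk
    norm_num at kk1 kk
    have hd1 : 2*(k:ℝ)+(j:ℝ)-1 ≠ 0 := by linarith
    have hd2 : 2*(k:ℝ)+(j:ℝ)+1 ≠ 0 := by linarith
    have hd2' : 2*((k:ℝ)+1)+(j:ℝ)-1 ≠ 0 := by linarith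
    have hd2'' : 2*(k:ℝ)+((j:ℝ)+2)-1 ≠ 0 := by linarith
    have hrk := hR2 k hk
    have hrk1 := hR2 (k+1) (by omega)
    push_cast at hrk hrk1
    rw [kk1, kk, hrk1, hrk]
    push_cast
    rw [hα, hβ]
    field_simp
    ring

theorem good_all (j : ℕ) (hj : 2 ≤ j) : Good j := by
  induction j using Nat.strong_induction_on with
  | _ j IH =>
    match j, hj with
    | 2, _ => exact good_two
    | 3, _ => exact good_three
    | (m+4), _ =>
      exact good_step (m+2) (by omega) (IH (m+2) (by omega) (by omega))

/-- Recurrence relation for the values `ĝ_j(0) = lim_{t→-1⁺} g_j(t)` of the even analytic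
extensions of the Berg functions. -/
theorem stmt_6 (j : ℕ) (hj : 2 ≤ j) :
    ∃ a b : ℝ,
      Tendsto (berg j) (𝓝[Set.Ioo (-1 : ℝ) 1] (-1)) (𝓝 a) ∧
      Tendsto (berg (j + 2)) (𝓝[Set.Ioo (-1 : ℝ) 1] (-1)) (𝓝 b) ∧
      b = (((j : ℝ) + 1) / (2 * π * ((j : ℝ) - 1))) *
          ((j : ℝ) * a - (2 * (j : ℝ) - 1) / sphereVol j) := by
  obtain ⟨G, ε, hε, hε2, hGa, hEq, hR1, hR3, hR2⟩ := good_all j hj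
  have hπ : (0:ℝ) < π := Real.pi_pos
  have hjR2 : (2:ℝ) ≤ (j:ℝ) := by exact_mod_cast hj
  have hω : (0:ℝ) < sphereVol j := sphereVol_pos (by omega)
  set α : ℝ := ((j:ℝ)+1)/(2*π) with hα
  set β : ℝ := ((j:ℝ)+1)/(2*π*((j:ℝ)-1)) with hβ
  set γ : ℝ := ((j:ℝ)+1)/(2*π*sphereVol j) with hγ
  have hstrip : ∀ᶠ t in 𝓝[Set.Ioo (-1:ℝ) 1] (-1), t ∈ Ioo (-1:ℝ) (-1+ε) := by
    have h1 : ∀ᶠ t in 𝓝[Set.Ioo (-1:ℝ) 1] (-1), t ∈ Ioo (-1:ℝ) 1 := self_mem_nhdsWithin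
    have h2 : ∀ᶠ t in 𝓝 (-1:ℝ), t ∈ Ioo (-1-1 : ℝ) (-1+ε) := by
      apply Ioo_mem_nhds <;> linarith
    filter_upwards [h1, nhdsWithin_le_nhds h2] with t ht1 ht2
    exact ⟨ht1.1, ht2.2⟩
  have hGc : ContinuousAt G (-1) := hGa.continuousAt
  have htend1 : Tendsto (berg j) (𝓝[Set.Ioo (-1:ℝ) 1] (-1)) (𝓝 (G (-1))) := by
    refine Tendsto.congr' ?_ (hGc.tendsto.mono_left nhdsWithin_le_nhds)
    filter_upwards [hstrip] with t ht
    exact (hEq t ht).symm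
  have hGd : ContinuousAt (deriv G) (-1) := (analyticAt_deriv hGa).continuousAt
  have htend2 : Tendsto (berg (j+2)) (𝓝[Set.Ioo (-1:ℝ) 1] (-1))
      (𝓝 (α * G (-1) + β * (-1) * deriv G (-1) + γ * (-1))) := by
    have hcont : Tendsto (fun t => α * G t + β * t * deriv G t + γ * t)
        (𝓝[Set.Ioo (-1:ℝ) 1] (-1)) (𝓝 (α * G (-1) + β * (-1) * deriv G (-1) + γ * (-1))) := by
      apply Tendsto.mono_left _ nhdsWithin_le_nhds
      exact ((continuousAt_const.mul hGc).add
        ((continuousAt_const.mul continuousAt_id).mul hGd)).add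
        (continuousAt_const.mul continuousAt_id)
    refine Tendsto.congr' ?_ hcont
    filter_upwards [hstrip] with t ht
    obtain ⟨m, hm⟩ : ∃ m, j = m + 2 := ⟨j - 2, by omega⟩
    subst hm
    have hde : deriv (berg (m+2)) t = deriv G t := by
      apply Filter.EventuallyEq.deriv_eq
      filter_upwards [isOpen_Ioo.mem_nhds ht] with s hs
      exact hEq s hs
    have heq2 : berg (m+2+2) t = α * G t + β * t * deriv G t + γ * t := by
      show (((m : ℝ) + 3) / (2 * π)) * berg (m + 2) t
          + (((m : ℝ) + 3) / (2 * π * ((m : ℝ) + 1))) * t * deriv (berg (m + 2)) t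
          + (((m : ℝ) + 3) / (2 * π * sphereVol (m + 2))) * t = _
      rw [hde, hEq t ht, hα, hβ, hγ]
      push_cast
      ring
    exact heq2.symm
  refine ⟨G (-1), _, htend1, htend2, ?_⟩
  rw [iteratedDeriv_one, iteratedDeriv_zero] at hR1
  rw [hR1, hα, hβ, hγ]
  have hω' : sphereVol j ≠ 0 := ne_of_gt hω
  have hπ' : π ≠ 0 := ne_of_gt hπ
  have hj1 : (j:ℝ) - 1 ≠ 0 := by linarith
  field_simp
  ring
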